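/- Let S be a schedule of an acyclic graph G with node costs, and let H be a hump of G with useful peak v. Let T be obtained from S by moving all nodes of H so that they are consecutive around v, preserving their relative order (the nodes of H before v are moved right to be adjacent to v; the nodes after v are moved left). Then T is still a schedule of G and height(T) ≤ height(S). -/

import Mathlib

def cost (L : List ℤ) : ℤ := L.sum

def height (L : List ℤ) : ℤ :=
  ((List.range (L.length + 1)).map fun k => (L.take k).sum).foldr max 0

variable {V : Type*} [DecidableEq V]

/-- `S` is a schedule (topological ordering) of the directed graph `r`. -/
def IsTopo (r : V → V → Prop) (S : List V) : Prop :=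
  S.Nodup ∧ (∀ v : V, v ∈ S) ∧
    ∀ x y, r x y → ∀ ix iy : ℕ, S[ix]? = some x → S[iy]? = some y → ix < iy

/-- `H` is a chain of `r`: its nodes are consecutive along `H`, and the only
edges of `r` incident on its nodes are the chain edges together with one from
a predecessor into `H.head` and one from `H.getLast` to a successor. -/
def IsChainOf (r : V → V → Prop) (H : List V) : Prop :=
  H ≠ [] ∧ H.Nodup ∧
  List.Chain' r H ∧
  (∀ x ∈ H, ∀ y, r x y → y ∈ H ∨ H.getLast? = some x) ∧
  (∀ x y, r x y → y ∈ H → x ∈ H ∨ H.head? = some y) ∧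
  (∀ x y, r x y → x ∈ H → y ∈ H → ∃ n : ℕ, H[n]? = some x ∧ H[n + 1]? = some y)

/-- The index `k` is a useful peak of the cost sequence `HC`. -/
def UsefulPeak (HC : List ℤ) (k : ℕ) : Prop :=
  k < HC.length ∧
  (∀ m < HC.length, (HC.take (m + 1)).sum ≤ (HC.take (k + 1)).sum) ∧
  (∀ m < k, 0 ≤ (HC.take (m + 1)).sum) ∧
  (∀ m, k < m → m < HC.length → HC.sum ≤ (HC.take (m + 1)).sum)

/-!
The chain edges are edges of `G`, so the nodes of `H` occur in `S` in chain order, and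
`S = A ++ v :: B` with `H = (A ∩ H) ++ v :: (B ∩ H)`. Only the endpoints of `H` have edges
to the rest of `G`; the head lies at or before `v` and the tail at or after it, so pulling
`H` together around `v` keeps every edge forward.

For the height, compare each prefix of `T` with a prefix of `S`. A prefix ending before `H`
is a prefix of `S` with an initial part of `A ∩ H` deleted, which has nonnegative cost. A
prefix ending inside `H` costs at most the prefix of `S` ending at `v`, since `v` is a peak of
`H`. A prefix ending after `H` is a prefix of `S` in which an initial part of `B ∩ H` is
replaced by all of `B ∩ H`, and usefulness says this does not increase the cost.
-/

open List

namespace List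

variable {α : Type*}

theorem prefix_append_iff {l l₁ l₂ : List α} :
    l <+: l₁ ++ l₂ ↔ l <+: l₁ ∨ ∃ t, t <+: l₂ ∧ l = l₁ ++ t := by
  constructor
  · rintro ⟨u, hu⟩
    rcases append_eq_append_iff.mp hu with ⟨a, rfl, rfl⟩ | ⟨b, rfl, rfl⟩
    · exact Or.inl (prefix_append _ _)
    · exact Or.inr ⟨b, prefix_append _ _, rfl⟩
  · rintro (h | ⟨t, ht, rfl⟩)
    · exact prefix_append_of_prefix h
    · exact (prefix_append_right_inj l₁).mpr ht

theorem exists_eq_take_succ_of_prefix {l L : List α} (h : l <+: L) (hl : l ≠ []) :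
    ∃ m < L.length, l = L.take (m + 1) := by
  have hpos := length_pos_iff.mpr hl
  refine ⟨l.length - 1, by have := h.length_le; omega, ?_⟩
  rw [Nat.sub_add_cancel hpos]
  exact prefix_iff_eq_take.mp h

theorem pair_sublist_append {a b : α} {l₁ l₂ : List α} (ha : a ∈ l₁) (hb : b ∈ l₂) :
    [a, b] <+ l₁ ++ l₂ :=
  cons_sublist_iff.mpr ⟨l₁, l₂, rfl, ha, singleton_sublist.mpr hb⟩

theorem eq_takeWhile_append_cons_tail_dropWhile [DecidableEq α] {S : List α} {v : α}
    (hv : v ∈ S) : S = S.takeWhile (· ≠ v) ++ v :: (S.dropWhile (· ≠ v)).tail := by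
  have hne : S.dropWhile (· ≠ v) ≠ [] := fun h => by
    simpa using dropWhile_eq_nil_iff.mp h v hv
  have hhead : (S.dropWhile (· ≠ v)).head hne = v := by
    simpa using head_dropWhile_not (· ≠ v) hne
  conv_lhs => rw [← takeWhile_append_dropWhile (p := (· ≠ v)) (l := S), ← cons_head_tail hne, hhead]

theorem exists_prefix_sum_eq_of_prefix_filter_not {M : Type*} [AddCommMonoid M] (c : α → M)
    {p : α → Prop} [DecidablePred p] {L l : List α} (h : l <+: L.filter (¬ p ·)) :
    ∃ L', L' <+: L ∧ ∃ m, m <+: L.filter p ∧ (L'.map c).sum = (m.map c).sum + (l.map c).sum := by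
  obtain ⟨L', hL', rfl⟩ := prefix_filter_iff.mp h
  exact ⟨L', hL', L'.filter p, hL'.filter _, (sum_map_filter_add_sum_map_filter_not p c L').symm⟩

theorem filter_not_append_append_filter_not_perm {p : α → Prop} [DecidablePred p]
    {A B H : List α} {v : α} (hH : H = A.filter p ++ v :: B.filter p) :
    A.filter (¬ p ·) ++ H ++ B.filter (¬ p ·) ~ A ++ v :: B := by
  have hA : A.filter p ++ A.filter (¬ p ·) ~ A := by
    simpa only [decide_not] using filter_append_perm (p ·) A
  have hB : B.filter p ++ B.filter (¬ p ·) ~ B := by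
    simpa only [decide_not] using filter_append_perm (p ·) B
  subst hH
  simpa using (perm_append_comm.trans hA).append (hB.cons v)

end List

theorem foldr_max_zero_le_iff {l : List ℤ} {b : ℤ} :
    l.foldr max 0 ≤ b ↔ 0 ≤ b ∧ ∀ x ∈ l, x ≤ b := by
  induction l with
  | nil => simp
  | cons a l ih => simp only [foldr_cons, max_le_iff, ih, mem_cons, forall_eq_or_imp]; tauto

theorem height_le_iff {L : List ℤ} {b : ℤ} : height L ≤ b ↔ 0 ≤ b ∧ ∀ l, l <+: L → l.sum ≤ b := by
  rw [height, foldr_max_zero_le_iff]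
  simp only [mem_map, mem_range, forall_exists_index, and_imp, forall_apply_eq_imp_iff₂]
  refine and_congr_right fun _ => ⟨fun h l hl => ?_, fun h n _ => h _ (take_prefix n L)⟩
  rw [prefix_iff_eq_take.mp hl]
  exact h _ (Nat.lt_succ_of_le hl.length_le)

theorem height_nonneg (L : List ℤ) : 0 ≤ height L := (height_le_iff.mp le_rfl).1

theorem sum_le_height {l L : List ℤ} (h : l <+: L) : l.sum ≤ height L :=
  (height_le_iff.mp le_rfl).2 l h

namespace UsefulPeak

variable {p q l : List ℤ} {x : ℤ}

theorem sum_nonneg_of_prefix_left (h : UsefulPeak (p ++ x :: q) p.length) (hl : l <+: p) :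
    0 ≤ l.sum := by
  rcases eq_or_ne l [] with rfl | hne
  · simp
  obtain ⟨m, hm, rfl⟩ := exists_eq_take_succ_of_prefix hl hne
  simpa [take_append_of_le_length (show m + 1 ≤ p.length by omega)] using h.2.2.1 m hm

theorem sum_le_of_prefix (h : UsefulPeak (p ++ x :: q) p.length) (hl : l <+: p ++ x :: q)
    (hne : l ≠ []) : l.sum ≤ p.sum + x := by
  obtain ⟨m, hm, rfl⟩ := exists_eq_take_succ_of_prefix hl hne
  simpa [take_append, take_of_length_le (Nat.le_succ p.length)] using h.2.1 m hm

theorem sum_le_sum_of_prefix_right (h : UsefulPeak (p ++ x :: q) p.length) (hl : l <+: q) :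
    q.sum ≤ l.sum := by
  rcases eq_or_ne l [] with rfl | hne
  · simpa using h.sum_le_of_prefix (prefix_refl _) (by simp)
  obtain ⟨m, hm, rfl⟩ := exists_eq_take_succ_of_prefix hl hne
  have := h.2.2.2 (p.length + 1 + m) (by omega) (by simp; omega)
  rw [show p.length + 1 + m + 1 = p.length + (m + 2) by omega, take_length_add_append] at this
  simp at this
  linarith

end UsefulPeak

theorem height_map_cluster_le {α : Type*} (c : α → ℤ) (p : α → Prop) [DecidablePred p]
    (A B : List α) (v : α)
    (hpeak : UsefulPeak ((A.filter p).map c ++ c v :: (B.filter p).map c)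
      ((A.filter p).map c).length) :
    height ((A.filter (¬ p ·) ++ (A.filter p ++ v :: B.filter p) ++ B.filter (¬ p ·)).map c)
      ≤ height ((A ++ v :: B).map c) := by
  have hS : ∀ L, L <+: A ++ v :: B → (L.map c).sum ≤ height ((A ++ v :: B).map c) :=
    fun L h => sum_le_height (h.map c)
  have hA' : ∀ l, l <+: A.filter (¬ p ·) → (l.map c).sum ≤ height ((A ++ v :: B).map c) := by
    intro l hl
    obtain ⟨L, hL, m, hm, hsum⟩ := exists_prefix_sum_eq_of_prefix_filter_not c hl
    have hm0 := hpeak.sum_nonneg_of_prefix_left (hm.map c)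
    have hSL := hS L (hL.trans (prefix_append _ _))
    linarith
  have hsplitA := sum_map_filter_add_sum_map_filter_not p c A
  rw [height_le_iff]
  refine ⟨height_nonneg _, fun lc hlc => ?_⟩
  obtain ⟨l, hl, rfl⟩ := prefix_map_iff.mp hlc
  rcases prefix_append_iff.mp hl with hl | ⟨t, ht, rfl⟩
  · rcases prefix_append_iff.mp hl with hl | ⟨t, ht, rfl⟩
    · exact hA' l hl
    rcases eq_or_ne t [] with rfl | hne
    · simpa using hA' _ (prefix_refl _)
    have hle := hpeak.sum_le_of_prefix (by simpa using ht.map c) (by simpa using hne)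
    have hSv := hS (A ++ [v]) (by simp)
    simp only [map_append, sum_append, map_cons, map_nil, sum_cons, sum_nil] at hle hSv ⊢
    linarith
  · obtain ⟨L, hL, m, hm, hsum⟩ := exists_prefix_sum_eq_of_prefix_filter_not c ht
    have hle := hpeak.sum_le_sum_of_prefix_right (hm.map c)
    have hSL := hS (A ++ v :: L) (by simpa using hL)
    simp only [map_append, sum_append, map_cons, sum_cons] at hle hSL ⊢
    linarith

theorem isTopo_iff {α : Type*} {r : α → α → Prop} {S : List α} :
    IsTopo r S ↔ S.Nodup ∧ (∀ v, v ∈ S) ∧ (∀ v, ¬ r v v) ∧ S.Pairwise (fun a b => ¬ r b a) := by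
  constructor
  · rintro ⟨hnd, hall, hlt⟩
    refine ⟨hnd, hall, fun v hv => ?_, pairwise_iff_getElem.mpr fun i j hi hj hij hr => ?_⟩
    · obtain ⟨i, hi, rfl⟩ := getElem_of_mem (hall v)
      exact lt_irrefl i (hlt _ _ hv i i (getElem?_eq_getElem hi) (getElem?_eq_getElem hi))
    · exact absurd (hlt _ _ hr j i (getElem?_eq_getElem hj) (getElem?_eq_getElem hi)) (by omega)
  · rintro ⟨hnd, hall, hirr, hpw⟩
    refine ⟨hnd, hall, fun x y hr ix iy hx hy => ?_⟩
    obtain ⟨hix, rfl⟩ := List.getElem?_eq_some_iff.mp hx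
    obtain ⟨hiy, rfl⟩ := List.getElem?_eq_some_iff.mp hy
    rcases lt_trichotomy ix iy with h | rfl | h
    · exact h
    · exact absurd hr (hirr _)
    · exact absurd hr (pairwise_iff_getElem.mp hpw iy ix hiy hix h)

theorem IsTopo.filter_mem_eq_of_isChain {α : Type*} [DecidableEq α] {r : α → α → Prop}
    {S H : List α} (hS : IsTopo r S) (hH : H.IsChain r) : S.filter (· ∈ H) = H := by
  let before : α → α → Prop := fun a b => S.idxOf a < S.idxOf b
  have : Std.Irrefl before := ⟨fun _ => lt_irrefl _⟩
  have : Std.Antisymm before := ⟨fun _ _ h h' => absurd (h.trans h') (lt_irrefl _)⟩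
  have : Trans before before before := ⟨lt_trans⟩
  have hSb : S.Pairwise before := pairwise_iff_getElem.mpr fun i j hi hj hij => by
    simpa only [before, hS.1.idxOf_getElem] using hij
  have hHb : H.Pairwise before := isChain_iff_pairwise.mp <| hH.imp fun a b hab =>
    hS.2.2 a b hab _ _ (getElem?_idxOf (hS.2.1 a)) (getElem?_idxOf (hS.2.1 b))
  exact (hSb.filter _).eq_of_mem_iff hHb fun a => by simp [hS.2.1 a]

theorem IsTopo.cluster {α : Type*} [DecidableEq α] {r : α → α → Prop} {S H A B : List α} {v : α}
    (hS : IsTopo r S) (hH : IsChainOf r H) (hSAB : S = A ++ v :: B)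
    (hHPQ : H = A.filter (· ∈ H) ++ v :: B.filter (· ∈ H)) :
    IsTopo r (A.filter (· ∉ H) ++ H ++ B.filter (· ∉ H)) := by
  obtain ⟨-, -, -, hlast, hhead, -⟩ := hH
  rw [isTopo_iff] at hS ⊢
  obtain ⟨hnd, hall, hirr, hpw⟩ := hS
  subst hSAB
  have hbefore : ∀ a b, [a, b] <+ A ++ v :: B → ¬ r b a := fun a b h =>
    pairwise_iff_forall_sublist.mp hpw h
  have hperm := filter_not_append_append_filter_not_perm hHPQ
  refine ⟨hperm.nodup_iff.mpr hnd, fun x => hperm.mem_iff.mpr (hall x), hirr, ?_⟩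
  have hHS : H <+ A ++ v :: B := by
    rw [hHPQ]
    exact filter_sublist.append (filter_sublist.cons_cons v)
  rw [pairwise_append, pairwise_append]
  refine ⟨⟨hpw.sublist (filter_sublist.trans (sublist_append_left _ _)), hpw.sublist hHS, ?_⟩,
    hpw.sublist (filter_sublist.trans ((sublist_cons_self v B).trans (sublist_append_right A _))),
    ?_⟩
  · intro a ha h hh hr
    obtain ⟨haA, haH⟩ := mem_filter.mp ha
    have hlast' := (hlast h hh a hr).resolve_left (by simpa using haH)
    rw [hHPQ, getLast?_append_of_ne_nil _ (cons_ne_nil _ _)] at hlast'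
    have hhB : h ∈ v :: B := (filter_sublist.cons_cons v).subset (mem_of_getLast? hlast')
    exact hbefore a h (pair_sublist_append haA hhB) hr
  · intro x hx b hb hr
    obtain ⟨hbB, hbH⟩ := mem_filter.mp hb
    rcases mem_append.mp hx with hx | hx
    · exact hbefore x b (pair_sublist_append (mem_filter.mp hx).1 (mem_cons_of_mem v hbB)) hr
    have hhead' := (hhead b x hr hx).resolve_left (by simpa using hbH)
    rw [hHPQ, ← singleton_append, ← append_assoc, head?_append_of_ne_nil _ (by simp)] at hhead'
    have hxA : x ∈ A ++ [v] := (filter_sublist.append (Sublist.refl _)).subset (mem_of_head? hhead')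
    exact hbefore x b (by simpa using pair_sublist_append hxA hbB) hr

/-- Clustering the nodes of a hump `H` to its useful peak `v` in a schedule
`S` yields a schedule of no greater height. -/
theorem cluster_lemma (r : V → V → Prop) (c : V → ℤ) (S : List V)
    (hS : IsTopo r S) (H : List V) (hH : IsChainOf r H)
    (k : ℕ) (v : V) (hv : H[k]? = some v)
    (hpeak : UsefulPeak (H.map c) k)
    (T : List V)
    (hT : T = ((S.takeWhile fun x => decide (x ≠ v)).filter fun x => decide (x ∉ H))
        ++ H ++
        (((S.dropWhile fun x => decide (x ≠ v)).tail).filter fun x => decide (x ∉ H))) :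
    IsTopo r T ∧ height (T.map c) ≤ height (S.map c) := by
  have hSAB := eq_takeWhile_append_cons_tail_dropWhile (hS.2.1 v)
  set A := S.takeWhile fun x => decide (x ≠ v)
  set B := (S.dropWhile fun x => decide (x ≠ v)).tail
  have hHPQ : H = A.filter (· ∈ H) ++ v :: B.filter (· ∈ H) := by
    conv_lhs => rw [← hS.filter_mem_eq_of_isChain hH.2.2.1, hSAB]
    simp [mem_of_getElem? hv]
  set P := A.filter (· ∈ H)
  have hk : P.length = k := by
    have hvP : H[P.length]? = some v := by rw [hHPQ]; simp
    exact (getElem?_inj (List.getElem?_eq_some_iff.mp hvP).1 hH.2.1).mp (hvP.trans hv.symm)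
  refine ⟨hT ▸ hS.cluster hH hSAB hHPQ, ?_⟩
  rw [hHPQ, map_append, map_cons, ← hk, ← length_map c] at hpeak
  have := height_map_cluster_le c (· ∈ H) A B v hpeak
  rw [← hHPQ, ← hSAB] at this
  rwa [hT]
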